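/- Let f, g be holomorphic on an open set U ⊆ ℂⁿ and let F(z) = f(z)·conj(g(z)). Then a point z ∈ U is a singular point of F (i.e. fderiv ℝ F z : ℂⁿ → ℂ is not surjective) if and only if there exists λ ∈ ℂ with |λ| = 1 such that g(z)·conj(∇f(z)) = λ·f(z)·conj(∇g(z)) as vectors in ℂⁿ. (Equation (2.4), the characterisation of Sing f·ḡ.) -/

import Mathlib

open Complex Filter Function Metric

noncomputable section

/-- `ℂⁿ` with its Euclidean (Hermitian) norm. -/
abbrev Cn (n : ℕ) := EuclideanSpace ℂ (Fin n)

/-- Complex gradient `∇f(z) = (∂f/∂z₁,…,∂f/∂zₙ)(z)` of a holomorphic function `f`. -/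
def gradC {n : ℕ} (f : Cn n → ℂ) (z : Cn n) : Cn n :=
  WithLp.toLp 2 fun k => fderiv ℂ f z (EuclideanSpace.single k 1)

/-- Componentwise complex conjugate of a vector in `ℂⁿ`. -/
def conjVec {n : ℕ} (v : Cn n) : Cn n := WithLp.toLp 2 fun k => starRingEnd ℂ (v k)

/-! The real derivative of `f·ḡ` at `z` is `v ↦ Φ v + conj (Ψ v)` with the complex-linear forms
`Φ = conj (g z) • f'(z)` and `Ψ = conj (f z) • g'(z)`. If such a map misses a direction of `ℂ`,
some `c ≠ 0` has `re (c · (Φ v + conj (Ψ v))) = 0` for all `v`; replacing `v` by `t • v` for all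
`t ∈ ℂ` forces `c Φ + conj c Ψ = 0`, i.e. `Φ = μ Ψ` with `μ = -conj c / c` of modulus one.
Conversely, if `Φ = μ Ψ` with `|μ| = 1`, every value `w` of the map satisfies `conj w = conj μ · w`,
which fails for `w = 1` or `w = I`. -/

open ComplexConjugate

lemma LinearMap.apply_eq_re_mul (ℓ : ℂ →ₗ[ℝ] ℝ) (w : ℂ) : ℓ w = re ((ℓ 1 - ℓ I * I) * w) := by
  conv_lhs => rw [← re_add_im w]
  have hw : (w.re : ℂ) + w.im * I = w.re • (1 : ℂ) + w.im • I := by simp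
  rw [hw, map_add, map_smul, map_smul]
  simp [smul_eq_mul]
  ring

lemma LinearMap.exists_re_mul_eq_zero_of_not_surjective {M : Type*} [AddCommGroup M] [Module ℝ M]
    (L : M →ₗ[ℝ] ℂ) (hL : ¬ Surjective L) : ∃ c ≠ 0, ∀ v, re (c * L v) = 0 := by
  obtain ⟨ℓ, hℓ, hrange⟩ := (range L).exists_le_ker_of_lt_top
    (lt_top_iff_ne_top.2 (range_eq_top.not.2 hL))
  refine ⟨ℓ 1 - ℓ I * I, fun hc => hℓ (LinearMap.ext fun w => ?_), fun v => ?_⟩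
  · simp [ℓ.apply_eq_re_mul w, hc]
  · rw [← ℓ.apply_eq_re_mul]
    exact hrange ⟨v, rfl⟩

lemma Complex.eq_zero_of_forall_re_mul_eq_zero {w : ℂ} (h : ∀ t, re (t * w) = 0) : w = 0 := by
  simpa [mul_comm, mul_conj] using h (conj w)

theorem not_surjective_iff_eq_smul_of_apply_eq_add_conj {M : Type*} [AddCommGroup M] [Module ℂ M]
    [Module ℝ M] (L : M →ₗ[ℝ] ℂ) (Φ Ψ : M →ₗ[ℂ] ℂ) (hL : ∀ v, L v = Φ v + conj (Ψ v)) :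
    ¬ Surjective L ↔ ∃ μ : ℂ, ‖μ‖ = 1 ∧ Φ = μ • Ψ := by
  constructor
  · intro hL_not_surj
    obtain ⟨c, hc, hcL⟩ := L.exists_re_mul_eq_zero_of_not_surjective hL_not_surj
    have hΦΨ : ∀ v, c * Φ v + conj c * Ψ v = 0 := fun v =>
      eq_zero_of_forall_re_mul_eq_zero fun t => by
        have hmul : c * L (t • v) = t * (c * Φ v) + conj (t * (conj c * Ψ v)) := by
          rw [hL, map_smul, map_smul, smul_eq_mul, smul_eq_mul, map_mul, map_mul, map_mul,
            conj_conj]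
          ring
        have := hcL (t • v)
        rw [hmul, add_re, conj_re] at this
        rw [mul_add, add_re, this]
    refine ⟨-conj c / c, by simp [hc], LinearMap.ext fun v => ?_⟩
    rw [LinearMap.smul_apply, smul_eq_mul]
    field_simp
    linear_combination hΦΨ v
  · rintro ⟨μ, hμ, rfl⟩ hsurj
    have hconj : ∀ v, conj (L v) = conj μ * L v := fun v => by
      have hμμ : conj μ * μ = 1 := by
        rw [mul_comm, mul_conj, normSq_eq_norm_sq, hμ]
        norm_num
      rw [hL, LinearMap.smul_apply, smul_eq_mul, map_add, map_mul, conj_conj]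
      linear_combination -Ψ v * hμμ
    obtain ⟨v₁, h₁⟩ := hsurj 1
    obtain ⟨vI, hI⟩ := hsurj I
    have hμ₁ := hconj v₁
    have hμI := hconj vI
    rw [h₁, map_one, mul_one] at hμ₁
    rw [hI, conj_I, ← hμ₁, one_mul] at hμI
    exact I_ne_zero (by linear_combination -hμI / 2)

theorem fderiv_mul_conj_apply {E : Type*} [NormedAddCommGroup E] [NormedSpace ℂ E] {f g : E → ℂ}
    {z : E} (hf : DifferentiableAt ℂ f z) (hg : DifferentiableAt ℂ g z) (v : E) :
    fderiv ℝ (fun w => f w * conj (g w)) z v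
      = conj (g z) * fderiv ℂ f z v + f z * conj (fderiv ℂ g z v) := by
  have hconj_g : HasFDerivAt (fun w => conj (g w))
      (conjCLE.toContinuousLinearMap.comp ((fderiv ℂ g z).restrictScalars ℝ)) z :=
    conjCLE.toContinuousLinearMap.hasFDerivAt.comp z (hg.hasFDerivAt.restrictScalars ℝ)
  rw [((hf.hasFDerivAt.restrictScalars ℝ).fun_mul hconj_g).fderiv]
  simp
  ring

theorem smul_conjVec_gradC_eq_smul_iff {n : ℕ} (f g : Cn n → ℂ) (z : Cn n) (a b : ℂ) :
    a • conjVec (gradC f z) = b • conjVec (gradC g z)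
      ↔ conj a • fderiv ℂ f z = conj b • fderiv ℂ g z := by
  have hext : ∀ T S : Cn n →L[ℂ] ℂ,
      T = S ↔ ∀ k, T (EuclideanSpace.single k 1) = S (EuclideanSpace.single k 1) :=
    fun T S => ⟨fun h k => h ▸ rfl, fun h => ContinuousLinearMap.coe_injective <|
      (EuclideanSpace.basisFun (Fin n) ℂ).toBasis.ext (by simpa using h)⟩
  rw [hext, WithLp.ext_iff, funext_iff]
  refine forall_congr' fun k => ?_
  simp only [conjVec, gradC, PiLp.smul_apply, PiLp.toLp_apply, smul_eq_mul, smul_apply]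
  rw [← (starRingEnd ℂ).injective.eq_iff, map_mul, map_mul, conj_conj, conj_conj]

/-- **Equation (2.4): the characterisation of `Sing f·ḡ`.**  For `f, g` holomorphic on an
open `U ⊆ ℂⁿ` and `F = f·ḡ : z ↦ f z * conj (g z)`, a point `z ∈ U` is a singular point of
`F` (i.e. `fderiv ℝ F z : ℂⁿ → ℂ` is not surjective) if and only if
`g(z)·conj(∇f(z)) = λ·f(z)·conj(∇g(z))` for some `λ ∈ ℂ` with `|λ| = 1`. -/
theorem sing_fgbar_characterisation
    {n : ℕ} (U : Set (Cn n)) (hU : IsOpen U)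
    (f g : Cn n → ℂ) (hf : DifferentiableOn ℂ f U) (hg : DifferentiableOn ℂ g U)
    (F : Cn n → ℂ) (hF : ∀ z, F z = f z * starRingEnd ℂ (g z))
    (z : Cn n) (hz : z ∈ U) :
    ¬ Surjective ⇑(fderiv ℝ F z) ↔
      ∃ lam : ℂ, ‖lam‖ = 1 ∧
        g z • conjVec (gradC f z) = lam • (f z • conjVec (gradC g z)) := by
  have hfz : DifferentiableAt ℂ f z := hf.differentiableAt (hU.mem_nhds hz)
  have hgz : DifferentiableAt ℂ g z := hg.differentiableAt (hU.mem_nhds hz)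
  set Φ := conj (g z) • fderiv ℂ f z
  set Ψ := conj (f z) • fderiv ℂ g z
  have hDF : ∀ v, fderiv ℝ F z v = Φ v + conj (Ψ v) := fun v => by
    rw [funext hF, fderiv_mul_conj_apply hfz hgz]
    simp [Φ, Ψ]
  refine (not_surjective_iff_eq_smul_of_apply_eq_add_conj
    (fderiv ℝ F z).toLinearMap Φ Ψ hDF).trans ?_
  simp_rw [← ContinuousLinearMap.toLinearMap_smul, ContinuousLinearMap.coe_inj, smul_smul,
    smul_conjVec_gradC_eq_smul_iff, map_mul, mul_smul]
  rw [star_involutive.surjective.exists]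
  simp [Φ, Ψ]
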